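/- Let G be a finite, simple, connected, non-complete graph on n vertices with minimum degree δ. For t ∈ {1,…,n−δ} let a(G,t) = t + Σ_{u∈V} C(n−d(u)−1,t)/C(n,t) and c(G,t) = Σ_{u∈V} C(n−d(u)−1,t)/C(n,t) + 2 Σ_{{u,v}∈C(V,2)} C(n−d(u)−d(v)−2,t)/C(n,t). Then γ(G) ≤ min over t ∈ {1,…,n−δ} of [a(G,t) − (c(G,t) − (a(G,t)−t)^2)/(n − a(G,t))]. -/

import Mathlib

open Finset

/-- `D` is a dominating set of `G`: `N[u] ∩ D ≠ ∅` for every vertex `u`. -/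
def IsDomSet {V : Type*} (G : SimpleGraph V) (D : Finset V) : Prop :=
  ∀ u : V, ∃ v ∈ D, v = u ∨ G.Adj u v

/-- The domination number of `G`: the minimum cardinality of a dominating set. -/
noncomputable def domNum {V : Type*} [Fintype V] (G : SimpleGraph V) : ℕ :=
  sInf {k | ∃ D : Finset V, IsDomSet G D ∧ D.card = k}


section HMaux

variable {V : Type*} [Fintype V] [DecidableEq V] (G : SimpleGraph V) [DecidableRel G.Adj]

/-- closed neighborhood -/
private def cnbr (u : V) : Finset V := insert u (G.neighborFinset u)

private lemma card_cnbr (u : V) : (cnbr G u).card = G.degree u + 1 := by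
  rw [cnbr, card_insert_of_notMem (by simp), G.card_neighborFinset_eq_degree, Nat.add_comm]

private lemma count_disjoint {t : ℕ} (s : Finset V) :
    ((univ.powersetCard t).filter (fun T => Disjoint T s)).card
      = (Fintype.card V - s.card).choose t := by
  rw [← card_compl s, ← card_powersetCard]
  congr 1
  ext T
  simp only [mem_powersetCard, mem_filter, subset_univ, true_and,
    ← le_compl_iff_disjoint_right, le_eq_subset]
  tauto

/-- undominated vertices -/
private def undom (T : Finset V) : Finset V :=
  univ.filter (fun u => Disjoint T (cnbr G u))

private lemma domNum_le_undom (T : Finset V) :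
    domNum G ≤ T.card + (undom G T).card := by
  have hD : IsDomSet G (T ∪ undom G T) := by
    intro u
    by_cases h : Disjoint T (cnbr G u)
    · exact ⟨u, mem_union_right _ (by simp [undom, h]), Or.inl rfl⟩
    · obtain ⟨v, hvT, hvN⟩ := not_disjoint_iff.mp h
      refine ⟨v, mem_union_left _ hvT, ?_⟩
      rcases mem_insert.mp hvN with h | h
      · exact Or.inl h
      · exact Or.inr (by simpa using h)
  exact le_trans (Nat.sInf_le ⟨_, hD, rfl⟩) (card_union_le _ _)

private lemma undom_disjoint (T : Finset V) : Disjoint (undom G T) T := by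
  rw [disjoint_left]
  intro u hu huT
  exact (disjoint_left.mp (mem_filter.mp hu).2) huT (mem_insert_self u _)

private lemma undom_card_le (T : Finset V) :
    T.card + (undom G T).card ≤ Fintype.card V := by
  rw [Nat.add_comm, ← card_union_of_disjoint (undom_disjoint G T)]
  exact card_le_univ _

private lemma undom_card_lt {T : Finset V} {u v : V} (hu : u ∈ T) (hv : v ∉ T)
    (hadj : G.Adj u v) : T.card + (undom G T).card + 1 ≤ Fintype.card V := by
  have hvn : v ∉ undom G T := by
    intro h
    exact (disjoint_left.mp (mem_filter.mp h).2) hu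
      (mem_insert_of_mem (by simpa using hadj.symm))
  have hdis : Disjoint (undom G T) (insert v T) := by
    rw [disjoint_insert_right]
    exact ⟨hvn, undom_disjoint G T⟩
  calc T.card + (undom G T).card + 1
      = (undom G T).card + (insert v T).card := by
        rw [card_insert_of_notMem hv]; omega
    _ = ((undom G T) ∪ insert v T).card := (card_union_of_disjoint hdis).symm
    _ ≤ Fintype.card V := card_le_univ _

private lemma sum_undom (t : ℕ) :
    ∑ T ∈ univ.powersetCard t, (undom G T).card
      = ∑ u : V, (Fintype.card V - G.degree u - 1).choose t := by
  have h : ∀ T : Finset V, (undom G T).card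
      = ∑ u : V, if Disjoint T (cnbr G u) then 1 else 0 := by
    intro T; rw [undom, card_filter]
  simp_rw [h]
  rw [Finset.sum_comm]
  refine Finset.sum_congr rfl fun u _ => ?_
  rw [← card_filter, count_disjoint, card_cnbr, Nat.sub_sub]

private lemma sum_undom_sq (t : ℕ) :
    (∑ u : V, (Fintype.card V - G.degree u - 1).choose t)
      + ∑ p ∈ (univ : Finset V).offDiag,
          (Fintype.card V - G.degree p.1 - G.degree p.2 - 2).choose t
    ≤ ∑ T ∈ univ.powersetCard t, (undom G T).card ^ 2 := by
  have h : ∀ T : Finset V, (undom G T).card ^ 2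
      = ∑ p ∈ (univ : Finset V) ×ˢ univ,
          if Disjoint T (cnbr G p.1 ∪ cnbr G p.2) then 1 else 0 := by
    intro T
    rw [undom, card_filter, sq, sum_mul_sum, ← Finset.sum_product']
    refine Finset.sum_congr rfl fun p _ => ?_
    simp only [disjoint_union_right]
    split_ifs <;> simp_all
  simp_rw [h]
  rw [Finset.sum_comm]
  have hcount : ∀ p : V × V,
      (∑ T ∈ univ.powersetCard t,
        if Disjoint T (cnbr G p.1 ∪ cnbr G p.2) then 1 else 0)
      = (Fintype.card V - (cnbr G p.1 ∪ cnbr G p.2).card).choose t := by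
    intro p; rw [← card_filter, count_disjoint]
  simp_rw [hcount]
  rw [← diag_union_offDiag, sum_union (disjoint_diag_offDiag _), sum_diag]
  refine add_le_add (sum_le_sum fun u hu => ?_) (sum_le_sum fun p hp => ?_)
  · dsimp only; rw [union_self, card_cnbr, Nat.sub_sub]
  · apply Nat.choose_le_choose
    have h1 : (cnbr G p.1 ∪ cnbr G p.2).card ≤ G.degree p.1 + G.degree p.2 + 2 := by
      calc (cnbr G p.1 ∪ cnbr G p.2).card ≤ (cnbr G p.1).card + (cnbr G p.2).card :=
            card_union_le _ _
        _ = G.degree p.1 + G.degree p.2 + 2 := by rw [card_cnbr, card_cnbr]; omega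
    omega

end HMaux

/-- Corollary 2 (Harant–Mohr): for `G ∈ Γ_n` and every `t ∈ [n − δ]`,
`γ(G) ≤ a(G,t) − (c(G,t) − (a(G,t) − t)²)/(n − a(G,t))`, where
`a(G,t) = t + Σ_u C(n−d(u)−1,t)/C(n,t)` and
`c(G,t) = Σ_u C(n−d(u)−1,t)/C(n,t) + 2 Σ_{{u,v}} C(n−d(u)−d(v)−2,t)/C(n,t)`
(the unordered pair sum with factor 2 is written as a sum over ordered distinct pairs).
Hence `γ(G) ≤ γ_HM2(G)`. -/
theorem domination_bound_HM2 {V : Type*} [Fintype V] [DecidableEq V]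
    (G : SimpleGraph V) [DecidableRel G.Adj]
    (hconn : G.Connected) (hnc : G ≠ ⊤)
    (t : ℕ) (ht1 : 1 ≤ t) (ht2 : t ≤ Fintype.card V - G.minDegree)
    (a c : ℝ)
    (ha : a = (t : ℝ) + ∑ u : V, ((Fintype.card V - G.degree u - 1).choose t : ℝ)
            / ((Fintype.card V).choose t : ℝ))
    (hc : c = (∑ u : V, ((Fintype.card V - G.degree u - 1).choose t : ℝ)
            / ((Fintype.card V).choose t : ℝ))
        + ∑ p ∈ (univ : Finset V).offDiag,
            ((Fintype.card V - G.degree p.1 - G.degree p.2 - 2).choose t : ℝ)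
              / ((Fintype.card V).choose t : ℝ)) :
    (domNum G : ℝ) ≤ a - (c - (a - t) ^ 2) / ((Fintype.card V : ℝ) - a) := by
  have : Nonempty V := hconn.nonempty
  have hn2 : 2 ≤ Fintype.card V := by
    by_contra h
    push_neg at h
    have hs : Subsingleton V := Fintype.card_le_one_iff_subsingleton.mp (by omega)
    apply hnc
    ext u v
    simp only [SimpleGraph.top_adj]
    constructor
    · exact fun h' => h'.ne
    · intro h'; exact (h' (Subsingleton.elim u v)).elim
  have hadj : ∀ x : V, ∃ y, G.Adj x y := by
    intro x
    obtain ⟨y, hy⟩ := Fintype.exists_ne_of_one_lt_card (by omega) x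
    obtain ⟨w⟩ := hconn.preconnected x y
    cases w with
    | nil => exact (hy rfl).elim
    | cons h p => exact ⟨_, h⟩
  have hδ1 : 1 ≤ G.minDegree := by
    obtain ⟨v, hv⟩ := G.exists_minimal_degree_vertex
    rw [hv]
    obtain ⟨w, hw⟩ := hadj v
    have h1 : w ∈ G.neighborFinset v := by simpa using hw
    have h2 := Finset.card_pos.mpr ⟨w, h1⟩
    have h3 := G.card_neighborFinset_eq_degree v
    omega
  set n : ℕ := Fintype.card V with hn
  have htn : t ≤ n - 1 := by omega
  set N : ℝ := ((n.choose t : ℕ) : ℝ) with hNdef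
  have hN : (0:ℝ) < N := by
    rw [hNdef]
    exact_mod_cast Nat.choose_pos (by omega : t ≤ n)
  set 𝒯 : Finset (Finset V) := univ.powersetCard t with h𝒯
  have hcard𝒯 : 𝒯.card = n.choose t := by
    rw [h𝒯, card_powersetCard, card_univ]
  set f : Finset V → ℝ := fun T => ((undom G T).card : ℝ) with hf
  set γ : ℝ := (domNum G : ℝ) with hγdef
  -- special set T₀ witnessing a < n
  obtain ⟨v₀, huv⟩ := hadj (Classical.arbitrary V)
  set u₀ : V := Classical.arbitrary V with hu₀def
  have hne : u₀ ≠ v₀ := huv.ne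
  have hsub : ({u₀} : Finset V) ⊆ ({v₀} : Finset V)ᶜ := by
    rw [subset_compl_singleton]
    simp [hne.symm]
  have hcc : t ≤ (({v₀} : Finset V)ᶜ).card := by
    rw [card_compl, card_singleton]; omega
  obtain ⟨T₀, hT₀u, hT₀c, hT₀card⟩ :=
    exists_subsuperset_card_eq hsub (by simpa using ht1) hcc
  have hT₀mem : T₀ ∈ 𝒯 := by
    rw [h𝒯]; exact mem_powersetCard.mpr ⟨subset_univ _, hT₀card⟩
  have hv₀ : v₀ ∉ T₀ := subset_compl_singleton.mp hT₀c
  have hu₀ : u₀ ∈ T₀ := singleton_subset_iff.mp hT₀u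
  have hY0 : (t:ℝ) + f T₀ ≤ (n:ℝ) - 1 := by
    have h1 := undom_card_lt G hu₀ hv₀ huv
    rw [← hn, hT₀card] at h1
    have h2 : ((t + (undom G T₀).card + 1 : ℕ) : ℝ) ≤ (n:ℝ) := by exact_mod_cast h1
    push_cast at h2
    simp only [hf]
    linarith
  have hYle : ∀ T ∈ 𝒯, (t:ℝ) + f T ≤ (n:ℝ) := by
    intro T hT
    rw [h𝒯] at hT
    have hTc : T.card = t := (mem_powersetCard.mp hT).2
    have h1 := undom_card_le G T
    rw [← hn, hTc] at h1
    simp only [hf]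
    exact_mod_cast h1
  have hγle : ∀ T ∈ 𝒯, γ ≤ (t:ℝ) + f T := by
    intro T hT
    rw [h𝒯] at hT
    have hTc : T.card = t := (mem_powersetCard.mp hT).2
    have h1 := domNum_le_undom G T
    rw [hTc] at h1
    rw [hγdef]
    simp only [hf]
    exact_mod_cast h1
  have hsum1 : ∑ T ∈ 𝒯, f T = ∑ u : V, ((n - G.degree u - 1).choose t : ℝ) := by
    have h1 := sum_undom G (t := t)
    rw [← hn] at h1
    rw [h𝒯]
    simp only [hf]
    exact_mod_cast h1
  have hS : ∑ T ∈ 𝒯, f T = (a - t) * N := by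
    rw [hsum1, ha, ← sum_div]
    field_simp
    ring
  have hS2 : c * N ≤ ∑ T ∈ 𝒯, f T ^ 2 := by
    have h1 := sum_undom_sq G (t := t)
    rw [← hn] at h1
    have h0 : (∑ u : V, ((n - G.degree u - 1).choose t : ℝ))
        + ∑ p ∈ (univ : Finset V).offDiag,
            ((n - G.degree p.1 - G.degree p.2 - 2).choose t : ℝ)
        ≤ ∑ T ∈ 𝒯, f T ^ 2 := by
      rw [h𝒯]
      simp only [hf]
      exact_mod_cast h1
    have hcN : c * N = (∑ u : V, ((n - G.degree u - 1).choose t : ℝ))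
        + ∑ p ∈ (univ : Finset V).offDiag,
            ((n - G.degree p.1 - G.degree p.2 - 2).choose t : ℝ) := by
      rw [hc, ← sum_div, ← sum_div]
      field_simp
    rw [hcN]
    exact h0
  have key : (0:ℝ) ≤ ((n:ℝ) + γ - 2*t) * ((a - t) * N)
      - (∑ T ∈ 𝒯, f T ^ 2) + ((t:ℝ) - γ) * ((n:ℝ) - t) * N := by
    rw [← hS]
    have e : ∀ T ∈ 𝒯, (((t:ℝ) + f T) - γ) * ((n:ℝ) - ((t:ℝ) + f T))
        = ((n:ℝ) + γ - 2*t) * f T - f T ^ 2 + ((t:ℝ) - γ) * ((n:ℝ) - t) :=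
      fun T _ => by ring
    have e2 : ∑ T ∈ 𝒯, (((t:ℝ) + f T) - γ) * ((n:ℝ) - ((t:ℝ) + f T))
        = ((n:ℝ) + γ - 2*t) * (∑ T ∈ 𝒯, f T) - (∑ T ∈ 𝒯, f T ^ 2)
          + ((t:ℝ) - γ) * ((n:ℝ) - t) * N := by
      rw [sum_congr rfl e, sum_add_distrib, sum_sub_distrib, ← mul_sum,
        sum_const, hcard𝒯, nsmul_eq_mul, ← hNdef]
      ring
    rw [← e2]
    exact sum_nonneg fun T hT =>
      mul_nonneg (by linarith [hγle T hT]) (by linarith [hYle T hT])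
  have haltn : a < (n:ℝ) := by
    have hlt : ∑ T ∈ 𝒯, ((t:ℝ) + f T) < ∑ T ∈ 𝒯, (n:ℝ) :=
      sum_lt_sum hYle ⟨T₀, hT₀mem, by linarith [hY0]⟩
    have hl : ∑ T ∈ 𝒯, ((t:ℝ) + f T) = a * N := by
      rw [sum_add_distrib, hS, sum_const, hcard𝒯, nsmul_eq_mul, ← hNdef]
      ring
    have hr : ∑ T ∈ 𝒯, (n:ℝ) = (n:ℝ) * N := by
      rw [sum_const, hcard𝒯, nsmul_eq_mul, ← hNdef]
      ring
    rw [hl, hr] at hlt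
    exact lt_of_mul_lt_mul_right hlt hN.le
  have hna : (0:ℝ) < (n:ℝ) - a := by linarith
  have h2 : c - (a - t)^2 ≤ (a - γ) * ((n:ℝ) - a) := by nlinarith [key, hS2, hN]
  have h3 : (c - (a - t)^2)/((n:ℝ) - a) ≤ a - γ := by
    rw [div_le_iff₀ hna]; exact h2
  linarith
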